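/- The prior π_D(S) = (1-γ)^{(|S|-1)/(m-1)} · γ^{|S| - L_D(S)} defines a probability distribution on the collection C_D of all complete proper context sets of depth at most D, i.e., Σ_{S ∈ C_D} π_D(S) = 1. -/
import Mathlib


open Finset

/-- All strings of length exactly `k` over the alphabet `Fin m`. -/
def listsLen (m : ℕ) : ℕ → Finset (List (Fin m))
  | 0 => {[]}
  | k + 1 => ((Finset.univ : Finset (Fin m)) ×ˢ listsLen m k).image (fun p => p.1 :: p.2)

/-- All strings of length at most `D` over the alphabet `Fin m`. -/
def listsUpTo (m D : ℕ) : Finset (List (Fin m)) :=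
  (Finset.range (D + 1)).biUnion (fun k => listsLen m k)

/-- `C_D`: all complete and proper context sets (models) of depth at most `D`. -/
def contextSets (m D : ℕ) : Finset (Finset (List (Fin m))) :=
  (listsUpTo m D).powerset.filter
    (fun S => (∀ s ∈ S, ∀ t ∈ S, s <:+ t → s = t) ∧
      ∀ l ∈ listsLen m D, ∃ s ∈ S, s <:+ l)

/-- The prior `π_D(S) = (1-γ)^((|S|-1)/(m-1)) γ^(|S| - L_D(S))` on models. -/
noncomputable def modelPrior (m : ℕ) (γ : ℝ) (D : ℕ) (S : Finset (List (Fin m))) : ℝ :=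
  (1 - γ) ^ ((S.card - 1) / (m - 1)) * γ ^ (S.card - (S.filter (fun s => s.length = D)).card)

lemma mem_listsLen {m k : ℕ} {l : List (Fin m)} : l ∈ listsLen m k ↔ l.length = k := by
  induction k generalizing l with
  | zero => simp [listsLen, List.length_eq_zero_iff]
  | succ k ih =>
    simp only [listsLen, Finset.mem_image, Finset.mem_product, Finset.mem_univ, true_and]
    constructor
    · rintro ⟨⟨a, s⟩, hs, rfl⟩; simp [ih.mp hs]
    · intro h
      cases l with
      | nil => simp at h
      | cons a s => exact ⟨(a, s), ih.mpr (by simpa using h), rfl⟩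

lemma mem_listsUpTo {m D : ℕ} {l : List (Fin m)} : l ∈ listsUpTo m D ↔ l.length ≤ D := by
  simp only [listsUpTo, Finset.mem_biUnion, Finset.mem_range, mem_listsLen]
  constructor
  · rintro ⟨k, hk, rfl⟩; omega
  · intro h; exact ⟨l.length, by omega, rfl⟩

lemma mem_contextSets {m D : ℕ} {S : Finset (List (Fin m))} :
    S ∈ contextSets m D ↔ (∀ l ∈ S, l.length ≤ D) ∧
      (∀ s ∈ S, ∀ t ∈ S, s <:+ t → s = t) ∧
      ∀ l : List (Fin m), l.length = D → ∃ s ∈ S, s <:+ l := by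
  simp only [contextSets, Finset.mem_filter, Finset.mem_powerset]
  constructor
  · rintro ⟨h1, h2, h3⟩
    exact ⟨fun l hl => mem_listsUpTo.mp (h1 hl), h2, fun l hl => h3 l (mem_listsLen.mpr hl)⟩
  · rintro ⟨h1, h2, h3⟩
    exact ⟨fun l hl => mem_listsUpTo.mpr (h1 l hl), h2, fun l hl => h3 l (mem_listsLen.mp hl)⟩

lemma concat_suffix_concat {α : Type*} {s t : List α} {a b : α} :
    s ++ [a] <:+ t ++ [b] ↔ a = b ∧ s <:+ t := by
  rw [← List.reverse_prefix]
  simp [List.cons_prefix_cons, List.reverse_prefix]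

lemma suffix_concat_of_ne_nil {α : Type*} {s l : List α} {a : α}
    (h : s <:+ l ++ [a]) (hs : s ≠ []) : ∃ s', s = s' ++ [a] ∧ s' <:+ l := by
  obtain ⟨s', rfl⟩ : ∃ s', s = s' ++ [a] := by
    have := s.eq_nil_or_concat
    rcases this with h0 | ⟨s', b, rfl⟩
    · exact absurd h0 hs
    · rw [List.concat_eq_append] at h ⊢
      refine ⟨s', ?_⟩
      have := (concat_suffix_concat.mp h).1
      rw [this]
  exact ⟨s', rfl, (concat_suffix_concat.mp h).2⟩

/-- Combine one context set per branch into a context set of depth one more. -/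
def Phi (m : ℕ) (f : Fin m → Finset (List (Fin m))) : Finset (List (Fin m)) :=
  Finset.univ.biUnion (fun a => (f a).image (fun s => s ++ [a]))

lemma mem_Phi {m : ℕ} {f : Fin m → Finset (List (Fin m))} {l : List (Fin m)} :
    l ∈ Phi m f ↔ ∃ a, ∃ s ∈ f a, s ++ [a] = l := by
  simp [Phi]

lemma card_Phi {m : ℕ} (f : Fin m → Finset (List (Fin m))) :
    (Phi m f).card = ∑ a, (f a).card := by
  rw [Phi, Finset.card_biUnion]
  · exact Finset.sum_congr rfl fun a _ =>
      Finset.card_image_of_injective _ (List.append_left_injective [a])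
  · intro a _ b _ hab
    simp only [Finset.disjoint_left, Finset.mem_image]
    rintro l ⟨s, _, rfl⟩ ⟨t, _, h⟩
    have hba : b = a := by simpa using (List.append_inj' h rfl).2
    exact hab hba.symm

lemma filter_Phi {m D : ℕ} (f : Fin m → Finset (List (Fin m))) :
    ((Phi m f).filter (fun s => s.length = D + 1)).card
      = ∑ a, ((f a).filter (fun s => s.length = D)).card := by
  rw [Phi, Finset.filter_biUnion, Finset.card_biUnion]
  · refine Finset.sum_congr rfl fun a _ => ?_
    rw [Finset.filter_image]
    rw [Finset.card_image_of_injective _ (List.append_left_injective [a])]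
    congr 1
    apply Finset.filter_congr
    intro s _
    simp
  · intro a _ b _ hab
    simp only [Finset.disjoint_left, Finset.mem_filter, Finset.mem_image]
    rintro l ⟨⟨s, _, rfl⟩, _⟩ ⟨⟨t, _, h⟩, _⟩
    have hba : b = a := by simpa using (List.append_inj' h rfl).2
    exact hab hba.symm

lemma Phi_mem_contextSets {m D : ℕ} {f : Fin m → Finset (List (Fin m))}
    (hf : ∀ a, f a ∈ contextSets m D) : Phi m f ∈ contextSets m (D + 1) := by
  rw [mem_contextSets]
  refine ⟨?_, ?_, ?_⟩
  · rintro l hl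
    obtain ⟨a, s, hs, rfl⟩ := mem_Phi.mp hl
    have := (mem_contextSets.mp (hf a)).1 s hs
    simp; omega
  · rintro s hs t ht hst
    obtain ⟨a, s', hs', rfl⟩ := mem_Phi.mp hs
    obtain ⟨b, t', ht', rfl⟩ := mem_Phi.mp ht
    obtain ⟨rfl, h2⟩ := concat_suffix_concat.mp hst
    rw [(mem_contextSets.mp (hf a)).2.1 s' hs' t' ht' h2]
  · intro l hl
    have hne : l ≠ [] := by intro h; subst h; simp at hl
    obtain ⟨l', a, rfl⟩ := (l.eq_nil_or_concat).resolve_left hne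
    rw [List.concat_eq_append] at hl ⊢
    have hl' : l'.length = D := by simp at hl; omega
    obtain ⟨s, hs, hsl⟩ := (mem_contextSets.mp (hf a)).2.2 l' hl'
    exact ⟨s ++ [a], mem_Phi.mpr ⟨a, s, hs, rfl⟩, concat_suffix_concat.mpr ⟨rfl, hsl⟩⟩

lemma contextSets_nonempty_mem {m D : ℕ} (hm : 1 ≤ m) {S : Finset (List (Fin m))}
    (hS : S ∈ contextSets m D) : S.Nonempty := by
  obtain ⟨s, hs, -⟩ := (mem_contextSets.mp hS).2.2 (List.replicate D ⟨0, by omega⟩) (by simp)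
  exact ⟨s, hs⟩

lemma contextSets_zero (m : ℕ) : contextSets m 0 = {{[]}} := by
  ext S
  simp only [Finset.mem_singleton]
  rw [mem_contextSets]
  constructor
  · rintro ⟨h1, h2, h3⟩
    obtain ⟨s, hs, -⟩ := h3 [] rfl
    have hs' : s = [] := List.length_eq_zero_iff.mp (Nat.le_zero.mp (h1 s hs))
    subst hs'
    ext t
    simp only [Finset.mem_singleton]
    constructor
    · intro ht
      have : t = [] := List.length_eq_zero_iff.mp (Nat.le_zero.mp (h1 t ht))
      exact this
    · rintro rfl; exact hs
  · rintro rfl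
    refine ⟨by simp, by simp, fun l hl => ⟨[], by simp, List.nil_suffix⟩⟩

lemma nil_mem_iff {m D : ℕ} {S : Finset (List (Fin m))} (hS : S ∈ contextSets m D)
    (hne : S ≠ {[]}) : [] ∉ S := by
  intro h
  apply hne
  obtain ⟨h1, h2, h3⟩ := mem_contextSets.mp hS
  ext t
  simp only [Finset.mem_singleton]
  constructor
  · intro ht; exact (h2 [] h t ht List.nil_suffix).symm
  · rintro rfl; exact h

lemma decompose {m D : ℕ} {S : Finset (List (Fin m))}
    (hS : S ∈ contextSets m (D + 1)) (hne : S ≠ {[]}) :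
    ∃ f : Fin m → Finset (List (Fin m)), (∀ a, f a ∈ contextSets m D) ∧ S = Phi m f := by
  classical
  obtain ⟨h1, h2, h3⟩ := mem_contextSets.mp hS
  have hnil := nil_mem_iff hS hne
  refine ⟨fun a => (listsUpTo m D).filter (fun s => s ++ [a] ∈ S), fun a => ?_, ?_⟩
  · rw [mem_contextSets]
    refine ⟨?_, ?_, ?_⟩
    · intro l hl
      exact mem_listsUpTo.mp (Finset.mem_filter.mp hl).1
    · intro s hs t ht hst
      have hs' := (Finset.mem_filter.mp hs).2
      have ht' := (Finset.mem_filter.mp ht).2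
      have := h2 _ hs' _ ht' (concat_suffix_concat.mpr ⟨rfl, hst⟩)
      exact List.append_left_injective [a] this
    · intro l hl
      obtain ⟨t, ht, htl⟩ := h3 (l ++ [a]) (by simp [hl])
      have htne : t ≠ [] := by rintro rfl; exact hnil ht
      obtain ⟨t', rfl, ht'⟩ := suffix_concat_of_ne_nil htl htne
      refine ⟨t', Finset.mem_filter.mpr ⟨mem_listsUpTo.mpr ?_, ht⟩, ht'⟩
      have := h1 _ ht; simp at this; omega
  · ext l
    rw [mem_Phi]
    constructor
    · intro hl
      have hlne : l ≠ [] := by rintro rfl; exact hnil hl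
      obtain ⟨l', a, rfl⟩ := (l.eq_nil_or_concat).resolve_left hlne
      rw [List.concat_eq_append] at hl ⊢
      refine ⟨a, l', Finset.mem_filter.mpr ⟨mem_listsUpTo.mpr ?_, hl⟩, rfl⟩
      have := h1 _ hl; simp at this; omega
    · rintro ⟨a, s, hs, rfl⟩
      exact (Finset.mem_filter.mp hs).2

lemma Phi_injective {m : ℕ} {f g : Fin m → Finset (List (Fin m))}
    (h : Phi m f = Phi m g) : f = g := by
  funext a
  ext s
  constructor
  · intro hs
    have : s ++ [a] ∈ Phi m g := h ▸ mem_Phi.mpr ⟨a, s, hs, rfl⟩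
    obtain ⟨b, t, ht, hts⟩ := mem_Phi.mp this
    obtain ⟨h1, h2⟩ := List.append_inj' hts rfl
    obtain rfl : b = a := by simpa using h2
    obtain rfl := h1
    exact ht
  · intro hs
    have : s ++ [a] ∈ Phi m f := h ▸ mem_Phi.mpr ⟨a, s, hs, rfl⟩
    obtain ⟨b, t, ht, hts⟩ := mem_Phi.mp this
    obtain ⟨h1, h2⟩ := List.append_inj' hts rfl
    obtain rfl : b = a := by simpa using h2
    obtain rfl := h1
    exact ht

lemma contextSets_succ (m D : ℕ) (hm : 1 ≤ m) :
    contextSets m (D + 1) =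
      insert {[]} ((Fintype.piFinset (fun _ : Fin m => contextSets m D)).image (Phi m)) := by
  ext S
  simp only [Finset.mem_insert, Finset.mem_image, Fintype.mem_piFinset]
  constructor
  · intro hS
    by_cases hne : S = {[]}
    · exact Or.inl hne
    · obtain ⟨f, hf, rfl⟩ := decompose hS hne
      exact Or.inr ⟨f, hf, rfl⟩
  · rintro (rfl | ⟨f, hf, rfl⟩)
    · rw [mem_contextSets]
      exact ⟨by simp, by simp, fun l hl => ⟨[], by simp, List.nil_suffix⟩⟩
    · exact Phi_mem_contextSets hf

lemma card_contextSets {m D : ℕ} (hm : 2 ≤ m) :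
    ∀ {S : Finset (List (Fin m))}, S ∈ contextSets m D → ∃ q, S.card = (m - 1) * q + 1 := by
  induction D with
  | zero =>
    intro S hS
    rw [contextSets_zero] at hS
    simp only [Finset.mem_singleton] at hS
    exact ⟨0, by simp [hS]⟩
  | succ D ih =>
    intro S hS
    by_cases hne : S = {[]}
    · exact ⟨0, by simp [hne]⟩
    · obtain ⟨f, hf, rfl⟩ := decompose hS hne
      choose q hq using fun a => ih (hf a)
      refine ⟨∑ a, q a + 1, ?_⟩
      rw [card_Phi, Finset.sum_congr rfl (fun a _ => hq a), Finset.sum_add_distrib,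
        ← Finset.mul_sum]
      simp only [Finset.sum_const, Finset.card_univ, Fintype.card_fin, smul_eq_mul, mul_one]
      have : (m - 1) * (∑ a, q a + 1) = (m - 1) * ∑ a, q a + (m - 1) := by ring
      omega

theorem modelPrior_sums_to_one' (m : ℕ) (hm : 2 ≤ m) (γ : ℝ) (D : ℕ) :
    ∑ S ∈ contextSets m D, modelPrior m γ D S = 1 := by
  induction D with
  | zero =>
    rw [contextSets_zero, Finset.sum_singleton, modelPrior]
    simp [Finset.filter_singleton]
  | succ D ih =>
    rw [contextSets_succ m D (by omega), Finset.sum_insert, Finset.sum_image]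
    · have hnil : modelPrior m γ (D + 1) {[]} = γ := by
        rw [modelPrior]
        have : Finset.filter (fun s => s.length = D + 1) ({[]} : Finset (List (Fin m))) = ∅ := by
          simp [Finset.filter_singleton]
        rw [this]
        simp
      rw [hnil]
      have hPhi : ∀ f ∈ Fintype.piFinset (fun _ : Fin m => contextSets m D),
          modelPrior m γ (D + 1) (Phi m f) = (1 - γ) * ∏ a, modelPrior m γ D (f a) := by
        intro f hf
        rw [Fintype.mem_piFinset] at hf
        choose q hq using fun a => card_contextSets hm (hf a)
        have hL : ∀ a, ((f a).filter (fun s => s.length = D)).card ≤ (f a).card :=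
          fun a => Finset.card_filter_le _ _
        have hcard : (Phi m f).card = (m - 1) * (∑ a, q a + 1) + 1 := by
          rw [card_Phi, Finset.sum_congr rfl (fun a _ => hq a), Finset.sum_add_distrib,
            ← Finset.mul_sum]
          simp only [Finset.sum_const, Finset.card_univ, Fintype.card_fin, smul_eq_mul, mul_one]
          have : (m - 1) * (∑ a, q a + 1) = (m - 1) * ∑ a, q a + (m - 1) := by ring
          omega
        rw [modelPrior, hcard, filter_Phi]
        have h1 : ((m - 1) * (∑ a, q a + 1) + 1 - 1) / (m - 1) = ∑ a, q a + 1 := by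
          rw [Nat.add_sub_cancel, Nat.mul_div_cancel_left _ (by omega : 0 < m - 1)]
        rw [h1]
        have h2 : (m - 1) * (∑ a, q a + 1) + 1 - ∑ a, ((f a).filter (fun s => s.length = D)).card
            = ∑ a, ((f a).card - ((f a).filter (fun s => s.length = D)).card) := by
          rw [Finset.sum_tsub_distrib _ (fun a _ => hL a)]
          have : ∑ a, (f a).card = (m - 1) * (∑ a, q a + 1) + 1 := by
            rw [Finset.sum_congr rfl (fun a _ => hq a), Finset.sum_add_distrib,
              ← Finset.mul_sum]
            simp only [Finset.sum_const, Finset.card_univ, Fintype.card_fin, smul_eq_mul,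
              mul_one]
            have : (m - 1) * (∑ a, q a + 1) = (m - 1) * ∑ a, q a + (m - 1) := by ring
            omega
          have hle : ∑ a, ((f a).filter (fun s => s.length = D)).card ≤ ∑ a, (f a).card :=
            Finset.sum_le_sum (fun a _ => hL a)
          omega
        rw [h2]
        rw [pow_succ, ← Finset.prod_pow_eq_pow_sum, ← Finset.prod_pow_eq_pow_sum]
        have : ∀ a, modelPrior m γ D (f a)
            = (1 - γ) ^ q a * γ ^ ((f a).card - ((f a).filter (fun s => s.length = D)).card) := by
          intro a
          rw [modelPrior]
          congr 2
          rw [hq a]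
          rw [Nat.add_sub_cancel, Nat.mul_div_cancel_left _ (by omega : 0 < m - 1)]
        rw [Finset.prod_congr rfl (fun a _ => this a), Finset.prod_mul_distrib]
        ring
      rw [Finset.sum_congr rfl hPhi, ← Finset.mul_sum, ← Finset.prod_univ_sum]
      rw [Finset.prod_congr rfl (fun a _ => ih)]
      simp only [Finset.prod_const_one, mul_one]
      ring
    · intro f hf g hg h
      exact Phi_injective h
    · intro h
      simp only [Finset.mem_image, Fintype.mem_piFinset] at h
      obtain ⟨f, hf, hPhi⟩ := h
      have : ([] : List (Fin m)) ∈ Phi m f := hPhi ▸ Finset.mem_singleton_self _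
      obtain ⟨a, s, hs, hsa⟩ := mem_Phi.mp this
      simp at hsa


/-- `π_D` is a probability distribution on `C_D`. -/
theorem modelPrior_sums_to_one (m D : ℕ) (hm : 2 ≤ m) (γ : ℝ)
    (hγ : γ ∈ Set.Ioo (0:ℝ) 1) :
    ∑ S ∈ contextSets m D, modelPrior m γ D S = 1 :=
  modelPrior_sums_to_one' m hm γ D
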